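/- For a vector SD = a·i + b·j + c·k in the triangular grid, the graph distance from S to D equals min(|a−c| + |b−c|, |a−b| + |b−c|, |a−b| + |a−c|). -/

import Mathlib

/-- The triangular grid on `ℤ²`, with adjacency along `±i, ±j, ±k`,
where `i = (1,0)`, `j = (0,1)`, `k = (-1,-1)`. -/
def triGraph : SimpleGraph (ℤ × ℤ) where
  Adj u v := (u.1 - v.1 = 1 ∧ u.2 - v.2 = 0) ∨ (u.1 - v.1 = -1 ∧ u.2 - v.2 = 0) ∨
    (u.1 - v.1 = 0 ∧ u.2 - v.2 = 1) ∨ (u.1 - v.1 = 0 ∧ u.2 - v.2 = -1) ∨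
    (u.1 - v.1 = 1 ∧ u.2 - v.2 = 1) ∨ (u.1 - v.1 = -1 ∧ u.2 - v.2 = -1)
  symm := ⟨by intro u v h; omega⟩
  loopless := ⟨by intro v h; omega⟩

def triVec (a b c : ℤ) : ℤ × ℤ := a • ((1 : ℤ), (0 : ℤ)) + b • ((0 : ℤ), (1 : ℤ)) + c • ((-1 : ℤ), (-1 : ℤ))

/-!
Measure a displacement `d = (x, y)` by the hexagonal norm `max (|x|, |y|, |x - y|)`: the six
neighbours of the origin are exactly the vectors of norm one, so by the triangle inequality every
edge changes the norm of `v - S` by at most one, while from any `v ≠ S` some edge decreases it by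
exactly one. Hence the norm is the graph distance. For `a·i + b·j + c·k = (a - c, b - c)` it is
the largest of `|a - b|, |b - c|, |a - c|`, which is the sum of the other two because
`a - c = (a - b) + (b - c)`: that is the stated minimum.
-/

namespace SimpleGraph

variable {V : Type*} {G : SimpleGraph V} (f : V → ℕ)

theorem Walk.apply_le_apply_add_length (hlip : ∀ u v, G.Adj u v → f v ≤ f u + 1) {u v : V}
    (p : G.Walk u v) : f v ≤ f u + p.length := by
  induction p with
  | nil => simp
  | cons h _ ih =>
    rw [Walk.length_cons]
    have := hlip _ _ h
    omega

theorem exists_walk_length_eq_of_descent {s : V} (hzero : ∀ v, f v = 0 → v = s)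
    (hdesc : ∀ v, f v ≠ 0 → ∃ u, G.Adj u v ∧ f u + 1 = f v) (v : V) :
    ∃ p : G.Walk s v, p.length = f v := by
  induction hn : f v generalizing v with
  | zero => exact ⟨Walk.nil.copy rfl (hzero v hn).symm, by simp⟩
  | succ n ih =>
    obtain ⟨u, hadj, hu⟩ := hdesc v (by omega)
    obtain ⟨p, hp⟩ := ih u (by omega)
    exact ⟨p.concat hadj, by rw [Walk.length_concat, hp]⟩

theorem dist_eq_of_potential {s : V} (hf : ∀ v, f v = 0 ↔ v = s)
    (hlip : ∀ u v, G.Adj u v → f v ≤ f u + 1)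
    (hdesc : ∀ v, f v ≠ 0 → ∃ u, G.Adj u v ∧ f u + 1 = f v) (v : V) :
    G.dist s v = f v := by
  obtain ⟨p, hp⟩ := exists_walk_length_eq_of_descent f (fun v => (hf v).1) hdesc v
  obtain ⟨q, hq⟩ := p.reachable.exists_walk_length_eq_dist
  have hlower := q.apply_le_apply_add_length f hlip
  rw [(hf s).2 rfl, hq] at hlower
  have hupper := hp ▸ dist_le p
  omega

end SimpleGraph

def hexNorm (d : ℤ × ℤ) : ℕ := max d.1.natAbs (max d.2.natAbs (d.1 - d.2).natAbs)

theorem hexNorm_eq_zero_iff (d : ℤ × ℤ) : hexNorm d = 0 ↔ d = 0 := by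
  rw [Prod.ext_iff]
  simp only [hexNorm, Prod.fst_zero, Prod.snd_zero]
  omega

theorem hexNorm_add_le (d e : ℤ × ℤ) : hexNorm (d + e) ≤ hexNorm d + hexNorm e := by
  have h1 := Int.natAbs_add_le d.1 e.1
  have h2 := Int.natAbs_add_le d.2 e.2
  have h3 := Int.natAbs_add_le (d.1 - d.2) (e.1 - e.2)
  rw [sub_add_sub_comm] at h3
  simp only [hexNorm, Prod.fst_add, Prod.snd_add]
  omega

theorem exists_hexNorm_eq_one_hexNorm_add {d : ℤ × ℤ} (hd : hexNorm d ≠ 0) :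
    ∃ e, hexNorm e = 1 ∧ hexNorm (d + e) + 1 = hexNorm d := by
  obtain ⟨x, y⟩ := d
  simp only [hexNorm] at hd ⊢
  rcases lt_trichotomy x 0 with hx | rfl | hx <;> rcases lt_trichotomy y 0 with hy | rfl | hy
  · exact ⟨(1, 1), by simp only [Prod.mk_add_mk]; omega⟩
  · exact ⟨(1, 0), by simp only [Prod.mk_add_mk]; omega⟩
  · exact ⟨(1, 0), by simp only [Prod.mk_add_mk]; omega⟩
  · exact ⟨(0, 1), by simp only [Prod.mk_add_mk]; omega⟩
  · omega
  · exact ⟨(0, -1), by simp only [Prod.mk_add_mk]; omega⟩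
  · exact ⟨(-1, 0), by simp only [Prod.mk_add_mk]; omega⟩
  · exact ⟨(-1, 0), by simp only [Prod.mk_add_mk]; omega⟩
  · exact ⟨(-1, -1), by simp only [Prod.mk_add_mk]; omega⟩

theorem triGraph_adj_iff (u v : ℤ × ℤ) : triGraph.Adj u v ↔ hexNorm (u - v) = 1 := by
  simp only [triGraph, hexNorm, Prod.fst_sub, Prod.snd_sub]
  omega

theorem triGraph_dist_eq_hexNorm (S v : ℤ × ℤ) : triGraph.dist S v = hexNorm (v - S) := by
  refine SimpleGraph.dist_eq_of_potential (fun v => hexNorm (v - S)) ?_ ?_ ?_ v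
  · intro v
    rw [hexNorm_eq_zero_iff, sub_eq_zero]
  · intro u v huv
    calc hexNorm (v - S) = hexNorm ((u - S) + (v - u)) := by rw [sub_add_sub_cancel']
      _ ≤ hexNorm (u - S) + hexNorm (v - u) := hexNorm_add_le _ _
      _ = hexNorm (u - S) + 1 := by rw [(triGraph_adj_iff v u).1 huv.symm]
  · intro v hv
    obtain ⟨e, he, hdesc⟩ := exists_hexNorm_eq_one_hexNorm_add hv
    refine ⟨v + e, (triGraph_adj_iff _ _).2 (by rwa [add_sub_cancel_left]), ?_⟩
    rwa [add_sub_right_comm]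

theorem triVec_eq (a b c : ℤ) : triVec a b c = (a - c, b - c) := by
  ext <;> simp [triVec] <;> ring

/-- For a vector `SD = a·i + b·j + c·k` the graph distance from `S` to `D` equals
`min(|a−c| + |b−c|, |a−b| + |b−c|, |a−b| + |a−c|)`. -/
theorem triGraph_dist_formula (S : ℤ × ℤ) (a b c : ℤ) :
    triGraph.dist S (S + triVec a b c) =
      (min (|a - c| + |b - c|) (min (|a - b| + |b - c|) (|a - b| + |a - c|))).toNat := by
  rw [triGraph_dist_eq_hexNorm, add_sub_cancel_left, triVec_eq]
  simp only [hexNorm, Int.abs_eq_natAbs]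
  omega
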